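/- arXiv:1602.04328 — 5 statements merged into one kernel-verified Lean document; each statement's English description precedes it below -/
import Mathlib

section
/- Every weighted majority game admits a representation with integer quota and integer weights. That is, if a simple game Γ on players N = {1,...,n} has nonnegative real numbers q, w_1, ..., w_n such that a coalition S is winning iff Σ_{i∈S} w_i ≥ q, then there exist nonnegative integers q', w'_1, ..., w'_n such that S is winning iff Σ_{i∈S} w'_i ≥ q'. -/
/-- Every weighted majority game with nonnegative real quota and weights admits
an integer representation. -/
theorem integer_representation (n : ℕ) (W : Finset (Fin n) → Prop)
    (q : ℝ) (w : Fin n → ℝ) (hq : 0 ≤ q) (hw : ∀ i, 0 ≤ w i)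
    (h : ∀ S : Finset (Fin n), W S ↔ q ≤ ∑ i ∈ S, w i) :
    ∃ (q' : ℕ) (w' : Fin n → ℕ),
      ∀ S : Finset (Fin n), W S ↔ (q' : ℕ) ≤ ∑ i ∈ S, w' i := by
  by_cases hq0 : q = 0
  · refine ⟨0, fun _ => 0, fun S => ?_⟩
    simp [h S, hq0, Finset.sum_nonneg (fun i _ => hw i)]
  · have hqpos : 0 < q := hq.lt_of_ne (Ne.symm hq0)
    -- losing coalitions
    set L : Finset (Finset (Fin n)) :=
      Finset.univ.filter (fun S => ∑ i ∈ S, w i < q) with hL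
    have hLne : L.Nonempty := ⟨∅, by simp [hL, hqpos]⟩
    set m : ℝ := L.sup' hLne (fun S => ∑ i ∈ S, w i) with hm
    have hmem : ∀ S ∈ L, ∑ i ∈ S, w i ≤ m := fun S hS =>
      Finset.le_sup' (fun S => ∑ i ∈ S, w i) hS
    have hm0 : 0 ≤ m := by
      have := hmem ∅ (by simp [hL, hqpos])
      simpa using this
    have hmq : m < q := by
      obtain ⟨S, hS, hSm⟩ := Finset.exists_mem_eq_sup' hLne (fun S => ∑ i ∈ S, w i)
      rw [hm, hSm]
      exact (Finset.mem_filter.mp hS).2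
    set ε : ℝ := q - m with hε
    have hεpos : 0 < ε := by simp [hε]; linarith
    obtain ⟨M, hM⟩ := exists_nat_ge (((n : ℝ) + 1) / ε)
    have hMε : (n : ℝ) + 1 ≤ M * ε := by
      rw [div_le_iff₀ hεpos] at hM; linarith
    have hM0 : (0:ℝ) ≤ M := Nat.cast_nonneg M
    refine ⟨(⌊(M : ℝ) * q - n⌋).toNat, fun i => (⌊(M : ℝ) * w i⌋).toNat, fun S => ?_⟩
    -- basic facts about the integer weights, as reals
    have hwR : ∀ i, ((⌊(M : ℝ) * w i⌋).toNat : ℝ) = (⌊(M : ℝ) * w i⌋ : ℝ) := by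
      intro i
      exact_mod_cast congrArg (Int.cast : ℤ → ℝ)
        (Int.toNat_of_nonneg (Int.floor_nonneg.mpr (mul_nonneg hM0 (hw i))))
    have hqnn : (0:ℝ) ≤ (M : ℝ) * q - n := by
      have : (M:ℝ) * q = M * m + M * ε := by rw [hε]; ring
      nlinarith [mul_nonneg hM0 hm0]
    have hqR : (((⌊(M : ℝ) * q - n⌋).toNat : ℕ) : ℝ) = (⌊(M : ℝ) * q - n⌋ : ℝ) := by
      exact_mod_cast congrArg (Int.cast : ℤ → ℝ)
        (Int.toNat_of_nonneg (Int.floor_nonneg.mpr hqnn))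
    have hsum_up : ((∑ i ∈ S, (⌊(M : ℝ) * w i⌋).toNat : ℕ) : ℝ) ≤ (M : ℝ) * ∑ i ∈ S, w i := by
      push_cast
      rw [Finset.mul_sum]
      refine Finset.sum_le_sum (fun i _ => ?_)
      rw [hwR i]; exact Int.floor_le _
    have hsum_down : (M : ℝ) * (∑ i ∈ S, w i) - n ≤ ((∑ i ∈ S, (⌊(M : ℝ) * w i⌋).toNat : ℕ) : ℝ) := by
      push_cast
      have hcard : (S.card : ℝ) ≤ n := by
        exact_mod_cast (le_trans (Finset.card_le_univ S) (by simp))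
      have h2 : ∑ i ∈ S, ((M : ℝ) * w i - 1) ≤ ∑ i ∈ S, ((⌊(M : ℝ) * w i⌋).toNat : ℝ) := by
        refine Finset.sum_le_sum (fun i _ => ?_)
        rw [hwR i]
        exact le_of_lt (Int.sub_one_lt_floor _)
      rw [Finset.sum_sub_distrib] at h2
      simp only [Finset.sum_const, nsmul_eq_mul, mul_one] at h2
      rw [Finset.mul_sum]
      linarith
    rw [h S]
    constructor
    · intro hwin
      rw [← Nat.cast_le (α := ℝ), hqR]
      calc ((⌊(M : ℝ) * q - n⌋ : ℝ)) ≤ (M : ℝ) * q - n := Int.floor_le _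
        _ ≤ (M : ℝ) * (∑ i ∈ S, w i) - n := by nlinarith
        _ ≤ _ := hsum_down
    · intro hint
      by_contra hlose
      push_neg at hlose
      have hSL : S ∈ L := by simp [hL, hlose]
      have h1 : ((∑ i ∈ S, (⌊(M : ℝ) * w i⌋).toNat : ℕ) : ℝ) ≤ (M : ℝ) * m :=
        hsum_up.trans (by nlinarith [hmem S hSL])
      have h2 : (M : ℝ) * q - n - 1 < ((⌊(M : ℝ) * q - n⌋).toNat : ℝ) := by
        rw [hqR]
        have := Int.sub_one_lt_floor ((M : ℝ) * q - n)
        linarith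
      have h3 : (M : ℝ) * m ≤ (M : ℝ) * q - n - 1 := by
        have : (M:ℝ) * q = M * m + M * ε := by rw [hε]; ring
        linarith
      have := (Nat.cast_le (α := ℝ)).mpr hint
      linarith
end

section
/- Let Γ be the simple game on N = {1,...,2n} where S is winning iff S ∩ {2i−1, 2i} ≠ ∅ for every i. For n ≥ 2, Γ cannot be represented as a single weighted majority game; i.e., dim(Γ) ≥ 2. -/
def Weighted {α : Type*} [Fintype α] [DecidableEq α] (W : Finset α → Prop) : Prop :=
  ∃ (q : ℝ) (w : α → ℝ), 0 ≤ q ∧ (∀ i, 0 ≤ w i) ∧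
    ∀ S : Finset α, W S ↔ q ≤ ∑ i ∈ S, w i

noncomputable def dimension {α : Type*} [Fintype α] [DecidableEq α]
    (W : Finset α → Prop) : ℕ :=
  sInf {k | ∃ G : Fin k → (Finset α → Prop), (∀ i, Weighted (G i)) ∧
    ∀ S : Finset α, W S ↔ ∀ i, G i S}

lemma pairwise_not_weighted (n : ℕ) (hn : 2 ≤ n) :
    ¬ Weighted (fun S : Finset (Fin n × Fin 2) =>
        ∀ i : Fin n, ∃ b : Fin 2, (i, b) ∈ S) := by
  rintro ⟨q, w, hq, hw, h⟩
  set a : Fin n := ⟨0, by omega⟩ with ha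
  set b : Fin n := ⟨1, by omega⟩ with hb
  have hab : a ≠ b := by simp [ha, hb, Fin.ext_iff]
  set R : Finset (Fin n × Fin 2) :=
    (Finset.univ.filter (fun i : Fin n => 2 ≤ i.val)).image (fun i => (i, 0)) with hR
  have haR : ∀ c : Fin 2, (a, c) ∉ R := by
    intro c hc
    simp only [hR, Finset.mem_image, Finset.mem_filter, Finset.mem_univ, true_and] at hc
    obtain ⟨i, hi, hic⟩ := hc
    have : i = a := (Prod.mk.injEq _ _ _ _).mp hic |>.1
    simp [this, ha] at hi
  have hbR : ∀ c : Fin 2, (b, c) ∉ R := by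
    intro c hc
    simp only [hR, Finset.mem_image, Finset.mem_filter, Finset.mem_univ, true_and] at hc
    obtain ⟨i, hi, hic⟩ := hc
    have : i = b := (Prod.mk.injEq _ _ _ _).mp hic |>.1
    simp [this, hb] at hi
  set A : Finset (Fin n × Fin 2) := insert (a, 0) (insert (b, 1) R) with hA
  set B : Finset (Fin n × Fin 2) := insert (a, 1) (insert (b, 0) R) with hB
  set C : Finset (Fin n × Fin 2) := insert (a, 0) (insert (a, 1) R) with hC
  set D : Finset (Fin n × Fin 2) := insert (b, 0) (insert (b, 1) R) with hD
  -- sums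
  have sA : ∑ p ∈ A, w p = w (a, 0) + (w (b, 1) + ∑ p ∈ R, w p) := by
    rw [hA, Finset.sum_insert, Finset.sum_insert]
    · exact hbR 1
    · simp only [Finset.mem_insert]
      push_neg
      exact ⟨by simp [Prod.ext_iff, hab], haR 0⟩
  have sB : ∑ p ∈ B, w p = w (a, 1) + (w (b, 0) + ∑ p ∈ R, w p) := by
    rw [hB, Finset.sum_insert, Finset.sum_insert]
    · exact hbR 0
    · simp only [Finset.mem_insert]
      push_neg
      exact ⟨by simp [Prod.ext_iff, hab], haR 1⟩
  have sC : ∑ p ∈ C, w p = w (a, 0) + (w (a, 1) + ∑ p ∈ R, w p) := by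
    rw [hC, Finset.sum_insert, Finset.sum_insert]
    · exact haR 1
    · simp only [Finset.mem_insert]
      push_neg
      refine ⟨by simp [Prod.ext_iff], haR 0⟩
  have sD : ∑ p ∈ D, w p = w (b, 0) + (w (b, 1) + ∑ p ∈ R, w p) := by
    rw [hD, Finset.sum_insert, Finset.sum_insert]
    · exact hbR 1
    · simp only [Finset.mem_insert]
      push_neg
      refine ⟨by simp [Prod.ext_iff], hbR 0⟩
  -- case analysis helper
  have tri : ∀ i : Fin n, i = a ∨ i = b ∨ 2 ≤ i.val := by
    rintro ⟨v, hv⟩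
    simp only [ha, hb, Fin.ext_iff]
    omega
  have memR : ∀ i : Fin n, 2 ≤ i.val → (i, (0 : Fin 2)) ∈ R := by
    intro i hi
    simp only [hR, Finset.mem_image, Finset.mem_filter, Finset.mem_univ, true_and]
    exact ⟨i, hi, rfl⟩
  -- A, B winning
  have winA : q ≤ ∑ p ∈ A, w p := by
    rw [← h]
    intro i
    rcases tri i with rfl | rfl | hi
    · exact ⟨0, by simp [hA]⟩
    · exact ⟨1, by simp [hA]⟩
    · exact ⟨0, by simp [hA, Finset.mem_insert, memR i hi]⟩
  have winB : q ≤ ∑ p ∈ B, w p := by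
    rw [← h]
    intro i
    rcases tri i with rfl | rfl | hi
    · exact ⟨1, by simp [hB]⟩
    · exact ⟨0, by simp [hB]⟩
    · exact ⟨0, by simp [hB, Finset.mem_insert, memR i hi]⟩
  -- C, D losing
  have loseC : ∑ p ∈ C, w p < q := by
    rw [← not_le, ← h]
    intro hwin
    obtain ⟨c, hc⟩ := hwin b
    simp only [hC, Finset.mem_insert] at hc
    rcases hc with hc | hc | hc
    · exact hab ((Prod.mk.injEq _ _ _ _).mp hc).1.symm
    · exact hab ((Prod.mk.injEq _ _ _ _).mp hc).1.symm
    · exact hbR c hc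
  have loseD : ∑ p ∈ D, w p < q := by
    rw [← not_le, ← h]
    intro hwin
    obtain ⟨c, hc⟩ := hwin a
    simp only [hD, Finset.mem_insert] at hc
    rcases hc with hc | hc | hc
    · exact hab ((Prod.mk.injEq _ _ _ _).mp hc).1
    · exact hab ((Prod.mk.injEq _ _ _ _).mp hc).1
    · exact haR c hc
  linarith [winA, winB, loseC, loseD, sA, sB, sC, sD]

/-- For `n ≥ 2`, the game on `2n` players (pairs modeled as `Fin n × Fin 2`)
where `S` wins iff it hits every pair is not a weighted majority game; its
dimension is at least `2`. -/
theorem pairwise_game_not_weighted (n : ℕ) (hn : 2 ≤ n) :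
    ¬ Weighted (fun S : Finset (Fin n × Fin 2) =>
        ∀ i : Fin n, ∃ b : Fin 2, (i, b) ∈ S) ∧
    2 ≤ dimension (fun S : Finset (Fin n × Fin 2) =>
        ∀ i : Fin n, ∃ b : Fin 2, (i, b) ∈ S) := by
  have key := pairwise_not_weighted n hn
  refine ⟨key, ?_⟩
  have hnz : (0 : ℕ) < n := by omega
  -- the defining set is nonempty: the game is the intersection of n weighted games
  have hne : Set.Nonempty {k | ∃ G : Fin k → (Finset (Fin n × Fin 2) → Prop),
      (∀ i, Weighted (G i)) ∧
      ∀ S : Finset (Fin n × Fin 2),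
        (∀ i : Fin n, ∃ b : Fin 2, (i, b) ∈ S) ↔ ∀ i, G i S} := by
    refine ⟨n, fun i => fun S => ∃ b : Fin 2, (i, b) ∈ S, ?_, fun S => Iff.rfl⟩
    intro i
    refine ⟨1, fun p => if p.1 = i then 1 else 0, zero_le_one, fun p => by positivity, ?_⟩
    intro S
    constructor
    · rintro ⟨c, hc⟩
      have h1 : (fun p : Fin n × Fin 2 => if p.1 = i then (1:ℝ) else 0) (i, c)
          ≤ ∑ p ∈ S, (if p.1 = i then (1:ℝ) else 0) :=
        Finset.single_le_sum (f := fun p : Fin n × Fin 2 => if p.1 = i then (1:ℝ) else 0)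
          (fun p _ => by positivity) hc
      simpa using h1
    · intro h1
      by_contra hno
      have hz : ∑ p ∈ S, (if p.1 = i then (1:ℝ) else 0) = 0 := by
        refine Finset.sum_eq_zero fun p hp => ?_
        have : p.1 ≠ i := by
          intro hpi
          exact hno ⟨p.2, by rwa [← hpi, Prod.mk.eta]⟩
        simp [this]
      rw [hz] at h1
      linarith
  refine le_csInf hne ?_
  rintro k ⟨G, hG, hGW⟩
  by_contra hk
  push_neg at hk
  interval_cases k
  · -- k = 0 : empty coalition would win
    have : ∀ i : Fin n, ∃ b : Fin 2, (i, b) ∈ (∅ : Finset (Fin n × Fin 2)) :=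
      (hGW ∅).mpr (fun i => i.elim0)
    obtain ⟨c, hc⟩ := this ⟨0, hnz⟩
    exact absurd hc (Finset.notMem_empty _)
  · -- k = 1 : the game itself would be weighted
    obtain ⟨q, w, hq, hw, hiff⟩ := hG 0
    exact key ⟨q, w, hq, hw, fun S => by
      rw [← hiff S, ← Fin.forall_fin_one (p := fun i => G i S)]
      exact hGW S⟩
end

section
/- Let Γ* be the game on N = {1,...,2n} whose winning coalitions are exactly those S containing {2i−1, 2i} for some i ∈ {1,...,n}. For n ≥ 2, Γ* is not a weighted majority game; i.e., codim(Γ) ≥ 2 for the game Γ of pairwise-hitting coalitions. -/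
noncomputable def codimension {α : Type*} [Fintype α] [DecidableEq α]
    (W : Finset α → Prop) : ℕ :=
  sInf {k | ∃ G : Fin k → (Finset α → Prop), (∀ i, Weighted (G i)) ∧
    ∀ S : Finset α, W S ↔ ∃ i, G i S}

lemma graph_sum {n : ℕ} (f : Fin n → Fin 2) (S : Finset (Fin n × Fin 2)) :
    ((n : ℝ) ≤ ∑ x ∈ S, (if x.2 = f x.1 then (1:ℝ) else 0)) ↔ ∀ j, (j, f j) ∈ S := by
  classical
  rw [Finset.sum_boole, Nat.cast_le]
  set graph : Finset (Fin n × Fin 2) := Finset.univ.image (fun j => (j, f j)) with hg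
  have hginj : Function.Injective (fun j : Fin n => (j, f j)) := by
    intro a b h; exact (Prod.mk.injEq _ _ _ _ ▸ h).1
  have hcard : graph.card = n := by
    rw [hg, Finset.card_image_of_injective _ hginj, Finset.card_univ, Fintype.card_fin]
  have hsub : S.filter (fun x => x.2 = f x.1) ⊆ graph := by
    intro x hx
    simp only [Finset.mem_filter] at hx
    simp only [hg, Finset.mem_image, Finset.mem_univ, true_and]
    exact ⟨x.1, by rw [← hx.2]⟩
  constructor
  · intro h j
    have heq : graph = S.filter (fun x => x.2 = f x.1) :=
      (Finset.eq_of_subset_of_card_le hsub (by rw [hcard]; exact h)).symm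
    have hj : (j, f j) ∈ graph := by
      simp [hg]
    rw [heq] at hj
    exact (Finset.mem_filter.mp hj).1
  · intro h
    have hsub2 : graph ⊆ S.filter (fun x => x.2 = f x.1) := by
      intro x hx
      simp only [hg, Finset.mem_image, Finset.mem_univ, true_and] at hx
      obtain ⟨j, rfl⟩ := hx
      exact Finset.mem_filter.mpr ⟨h j, rfl⟩
    calc n = graph.card := hcard.symm
    _ ≤ _ := Finset.card_le_card hsub2

/-- For `n ≥ 2`, the game on `2n` players (pairs modeled as `Fin n × Fin 2`)
whose winning coalitions are those containing some full pair is not a weighted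
majority game; equivalently, the pairwise-hitting game has codimension ≥ 2. -/
theorem dual_pairwise_game_not_weighted (n : ℕ) (hn : 2 ≤ n) :
    ¬ Weighted (fun S : Finset (Fin n × Fin 2) =>
        ∃ i : Fin n, ∀ b : Fin 2, (i, b) ∈ S) ∧
    2 ≤ codimension (fun S : Finset (Fin n × Fin 2) =>
        ∀ i : Fin n, ∃ b : Fin 2, (i, b) ∈ S) := by

  classical
  have i0 : Fin n := ⟨0, by omega⟩
  set j0 : Fin n := ⟨0, by omega⟩ with hj0
  set j1 : Fin n := ⟨1, by omega⟩ with hj1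
  have hne : j0 ≠ j1 := by simp [hj0, hj1, Fin.ext_iff]
  constructor
  · rintro ⟨q, w, hq, hw, h⟩
    -- winning pairs
    have hA1 : q ≤ w (j0, 0) + w (j0, 1) := by
      have hm := (h {(j0, 0), (j0, 1)}).mp ⟨j0, by intro b; fin_cases b <;> simp⟩
      rwa [Finset.sum_pair (by simp)] at hm
    have hA2 : q ≤ w (j1, 0) + w (j1, 1) := by
      have hm := (h {(j1, 0), (j1, 1)}).mp ⟨j1, by intro b; fin_cases b <;> simp⟩
      rwa [Finset.sum_pair (by simp)] at hm
    -- losing transversals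
    have hB1 : w (j0, 0) + w (j1, 0) < q := by
      by_contra hle
      push_neg at hle
      have hmem : q ≤ ∑ x ∈ ({(j0, 0), (j1, 0)} : Finset (Fin n × Fin 2)), w x := by
        rwa [Finset.sum_pair (by simp [hne])]
      obtain ⟨i, hi⟩ := (h _).mpr hmem
      have := hi 1
      simp [Prod.ext_iff] at this
    have hB2 : w (j0, 1) + w (j1, 1) < q := by
      by_contra hle
      push_neg at hle
      have hmem : q ≤ ∑ x ∈ ({(j0, 1), (j1, 1)} : Finset (Fin n × Fin 2)), w x := by
        rwa [Finset.sum_pair (by simp [hne])]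
      obtain ⟨i, hi⟩ := (h _).mpr hmem
      have := hi 0
      simp [Prod.ext_iff] at this
    linarith
  · apply le_csInf
    · -- nonempty: witness with 2^n weighted games, one per transversal
      refine ⟨2 ^ n, ?_⟩
      have e : (Fin n → Fin 2) ≃ Fin (2 ^ n) :=
        Fintype.equivFinOfCardEq (by simp)
      refine ⟨fun i S => (n : ℝ) ≤ ∑ x ∈ S, (if x.2 = e.symm i x.1 then (1:ℝ) else 0),
        ?_, ?_⟩
      · intro i
        exact ⟨n, fun x => if x.2 = e.symm i x.1 then 1 else 0, by positivity,
          fun x => by positivity, fun S => Iff.rfl⟩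
      · intro S
        constructor
        · intro hS
          choose f hf using hS
          exact ⟨e f, (graph_sum _ _).mpr (by simpa using hf)⟩
        · rintro ⟨i, hi⟩ j
          exact ⟨e.symm i j, (graph_sum _ _).mp hi j⟩
    · -- every k in the set is ≥ 2
      rintro k ⟨G, hG, hiff⟩
      by_contra hk
      push_neg at hk
      interval_cases k
      · obtain ⟨i, -⟩ := (hiff Finset.univ).mp (fun i => ⟨0, Finset.mem_univ _⟩)
        exact i.elim0
      · obtain ⟨q, w, hq, hw, h⟩ := hG 0
        have hG0 : ∀ S, (∀ i : Fin n, ∃ b : Fin 2, (i, b) ∈ S) ↔ q ≤ ∑ x ∈ S, w x := by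
          intro S
          refine Iff.trans (hiff S) ?_
          constructor
          · rintro ⟨i, hi⟩; fin_cases i; exact (h S).mp hi
          · intro hs; exact ⟨0, (h S).mpr hs⟩
        set U : Finset (Fin n × Fin 2) := Finset.univ
        have hsum : ∀ A : Finset (Fin n × Fin 2),
            ∑ x ∈ U \ A, w x = ∑ x ∈ U, w x - ∑ x ∈ A, w x := by
          intro A
          rw [Finset.sum_sdiff_eq_sub (Finset.subset_univ A)]
        -- winning: complements of same-slot transversals
        have hM1 : q ≤ ∑ x ∈ U \ {(j0, 0), (j1, 0)}, w x := by
          refine (hG0 _).mp fun i => ⟨1, ?_⟩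
          simp [U, Prod.ext_iff]
        have hM2 : q ≤ ∑ x ∈ U \ {(j0, 1), (j1, 1)}, w x := by
          refine (hG0 _).mp fun i => ⟨0, ?_⟩
          simp [U, Prod.ext_iff]
        -- losing: complements of full pairs
        have hL1 : ∑ x ∈ U \ {(j0, 0), (j0, 1)}, w x < q := by
          by_contra hle
          push_neg at hle
          obtain ⟨b, hb⟩ := (hG0 _).mpr hle j0
          fin_cases b <;> simp [U] at hb
        have hL2 : ∑ x ∈ U \ {(j1, 0), (j1, 1)}, w x < q := by
          by_contra hle
          push_neg at hle
          obtain ⟨b, hb⟩ := (hG0 _).mpr hle j1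
          fin_cases b <;> simp [U] at hb
        rw [hsum, Finset.sum_pair (by simp [hne])] at hM1 hM2 hL1 hL2
        linarith
end

section
/- Let I = (b; a_1,...,a_n) be positive integers and d > 1. Define Γ(I,d) on n + 2d players as the intersection of the d weighted games [3b+1; 3a_1,...,3a_n, e^j] for j = 1,...,d, where e^j assigns weight 1 to the two extra players 2j−1 and 2j (among the 2d extra players) and 0 to the others. Then for X ⊆ {1,...,n} and Y ⊆ extra players: if Σ_{i∈X} a_i > b then X ∪ Y is winning in Γ(I,d); if Σ_{i∈X} a_i < b then X ∪ Y is losing; and if Σ_{i∈X} a_i = b then X ∪ Y is winning iff Y intersects every pair {2j−1, 2j}, j = 1,...,d. -/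
/-- Weight function of the `j`-th weighted game defining `Γ(I,d)`:
players are `Fin n ⊕ (Fin d × Fin 2)` (the `n` subset-sum players plus `2d`
extra players grouped into `d` pairs). -/
def wt (n d : ℕ) (a : Fin n → ℕ) (j : Fin d) : Fin n ⊕ (Fin d × Fin 2) → ℕ :=
  fun p => match p with
  | Sum.inl i => 3 * a i
  | Sum.inr (k, _) => if k = j then 1 else 0

/-- The game `Γ(I,d)`: intersection of the `d` weighted games `[3b+1; 3a, e^j]`. -/
def GammaId (n d : ℕ) (a : Fin n → ℕ) (b : ℕ)
    (S : Finset (Fin n ⊕ (Fin d × Fin 2))) : Prop :=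
  ∀ j : Fin d, 3 * b + 1 ≤ ∑ p ∈ S, wt n d a j p

/-!
The extra players contribute at most `2` to the `j`-th weight, and the main players contribute
a multiple of `3`. Hence the threshold `3b + 1` is met exactly when `Σ_{i∈X} a_i > b`, or
`Σ_{i∈X} a_i = b` and `Y` contains a member of the `j`-th pair.
-/

open Finset

section Pairs

variable {α β : Type*} [DecidableEq α]

lemma card_filter_fst_eq_le_card [Fintype β] (Y : Finset (α × β)) (j : α) :
    #{p ∈ Y | p.1 = j} ≤ Fintype.card β :=
  card_le_card_of_injOn Prod.snd (fun _ _ => mem_coe.2 (mem_univ _)) fun _ hp _ hq hpq =>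
    Prod.ext ((mem_filter.1 hp).2.trans (mem_filter.1 hq).2.symm) hpq

lemma filter_fst_eq_nonempty_iff (Y : Finset (α × β)) (j : α) :
    ({p ∈ Y | p.1 = j} : Finset (α × β)).Nonempty ↔ ∃ c, (j, c) ∈ Y := by
  constructor
  · rintro ⟨⟨k, c⟩, hp⟩
    obtain ⟨hmem, rfl⟩ := mem_filter.1 hp
    exact ⟨c, hmem⟩
  · rintro ⟨c, hc⟩
    exact ⟨(j, c), mem_filter.2 ⟨hc, rfl⟩⟩

end Pairs

lemma sum_wt_disjSum (n d : ℕ) (a : Fin n → ℕ) (j : Fin d)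
    (X : Finset (Fin n)) (Y : Finset (Fin d × Fin 2)) :
    ∑ p ∈ X.disjSum Y, wt n d a j p = 3 * ∑ i ∈ X, a i + #{p ∈ Y | p.1 = j} := by
  rw [sum_disjSum, mul_sum, card_filter]
  rfl

lemma gammaId_disjSum_iff (n d : ℕ) (a : Fin n → ℕ) (b : ℕ)
    (X : Finset (Fin n)) (Y : Finset (Fin d × Fin 2)) :
    GammaId n d a b (X.disjSum Y) ↔
      ∀ j : Fin d, 3 * b + 1 ≤ 3 * ∑ i ∈ X, a i + #{p ∈ Y | p.1 = j} := by
  simp only [GammaId, sum_wt_disjSum]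

theorem gammaId_cases_general (n d : ℕ) (a : Fin n → ℕ) (b : ℕ)
    (hd : 1 < d)
    (X : Finset (Fin n)) (Y : Finset (Fin d × Fin 2)) :
    ((b < ∑ i ∈ X, a i) → GammaId n d a b (X.disjSum Y)) ∧
    ((∑ i ∈ X, a i < b) → ¬ GammaId n d a b (X.disjSum Y)) ∧
    ((∑ i ∈ X, a i = b) →
      (GammaId n d a b (X.disjSum Y) ↔ ∀ j : Fin d, ∃ c : Fin 2, (j, c) ∈ Y)) := by
  refine ⟨fun hgt => ?_, fun hlt hwin => ?_, fun heq => ?_⟩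
  · rw [gammaId_disjSum_iff]
    intro j
    omega
  · let j : Fin d := ⟨0, by omega⟩
    have hwin_j := (gammaId_disjSum_iff n d a b X Y).1 hwin j
    have hpair := card_filter_fst_eq_le_card Y j
    rw [Fintype.card_fin] at hpair
    omega
  · rw [gammaId_disjSum_iff, heq]
    refine forall_congr' fun j => ?_
    rw [← filter_fst_eq_nonempty_iff, ← card_pos]
    omega

/-- Key properties of `Γ(I,d)`: for a coalition `X ∪ Y` with `X` among the first
`n` players and `Y` among the extra players, winning is determined by comparing
`Σ_{i∈X} a_i` with `b`, with ties resolved by whether `Y` hits every pair. -/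
theorem gammaId_cases (n d : ℕ) (a : Fin n → ℕ) (b : ℕ)
    (ha : ∀ i, 0 < a i) (hb : 0 < b) (hd : 1 < d)
    (X : Finset (Fin n)) (Y : Finset (Fin d × Fin 2)) :
    ((b < ∑ i ∈ X, a i) → GammaId n d a b (X.disjSum Y)) ∧
    ((∑ i ∈ X, a i < b) → ¬ GammaId n d a b (X.disjSum Y)) ∧
    ((∑ i ∈ X, a i = b) →
      (GammaId n d a b (X.disjSum Y) ↔ ∀ j : Fin d, ∃ c : Fin 2, (j, c) ∈ Y)) :=
  gammaId_cases_general n d a b hd X Y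
end

section
/- Let I = (b; a_1,...,a_n), d > 1, and Γ(I,d) as above. If there exists X ⊆ {1,...,n} with Σ_{i∈X} a_i = b, then dim(Γ(I,d)) ≥ dim(Γ_d), where Γ_d is the game on 2d players whose winning coalitions are those hitting every pair {2j−1, 2j}; i.e., any representation of Γ(I,d) as an intersection of k weighted games yields a representation of Γ_d as an intersection of k weighted games. -/
/-- The game `Γ_d` on `2d` players (pairs modeled as `Fin d × Fin 2`):
`S` wins iff it hits every pair. -/
def GammaD (d : ℕ) (T : Finset (Fin d × Fin 2)) : Prop :=
  ∀ j : Fin d, ∃ c : Fin 2, (j, c) ∈ T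

/-- If some subset of the `a_i` sums to `b`, then every representation of
`Γ(I,d)` as an intersection of `k` weighted games yields one of `Γ_d` as an
intersection of `k` weighted games; hence `dim(Γ_d) ≤ dim(Γ(I,d))`. -/
theorem gammaId_solution_dim (n d : ℕ) (a : Fin n → ℕ) (b : ℕ)
    (ha : ∀ i, 0 < a i) (hb : 0 < b) (hd : 1 < d)
    (hyes : ∃ X : Finset (Fin n), ∑ i ∈ X, a i = b) :
    (∀ (k : ℕ) (G : Fin k → (Finset (Fin n ⊕ (Fin d × Fin 2)) → Prop)),
      (∀ i, Weighted (G i)) →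
      (∀ S, GammaId n d a b S ↔ ∀ i, G i S) →
      ∃ H : Fin k → (Finset (Fin d × Fin 2) → Prop),
        (∀ i, Weighted (H i)) ∧ ∀ T, GammaD d T ↔ ∀ i, H i T) ∧
    dimension (GammaD d) ≤ dimension (GammaId n d a b) := by
  obtain ⟨X, hX⟩ := hyes
  set F : Finset (Fin d × Fin 2) → Finset (Fin n ⊕ (Fin d × Fin 2)) :=
    fun T => X.map ⟨Sum.inl, Sum.inl_injective⟩ ∪ T.map ⟨Sum.inr, Sum.inr_injective⟩ with hF
  have hdisj : ∀ T : Finset (Fin d × Fin 2),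
      Disjoint (X.map ⟨Sum.inl, Sum.inl_injective⟩)
        (T.map ⟨Sum.inr, Sum.inr_injective⟩) := by
    intro T
    simp [Finset.disjoint_left]
  have hwtr : ∀ (j : Fin d) (p : Fin d × Fin 2),
      wt n d a j (Sum.inr p) = if p.1 = j then 1 else 0 := by
    rintro j ⟨k, c⟩; rfl
  have hsum : ∀ (T : Finset (Fin d × Fin 2)) (j : Fin d),
      ∑ p ∈ F T, wt n d a j p
        = 3 * b + ∑ p ∈ T, (if p.1 = j then 1 else 0) := by
    intro T j
    rw [hF]
    rw [Finset.sum_union (hdisj T), Finset.sum_map, Finset.sum_map]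
    simp only [Function.Embedding.coeFn_mk, hwtr]
    congr 1
    show ∑ i ∈ X, 3 * a i = 3 * b
    rw [← Finset.mul_sum, hX]
  have key : ∀ T : Finset (Fin d × Fin 2), GammaId n d a b (F T) ↔ GammaD d T := by
    intro T
    unfold GammaId GammaD
    refine forall_congr' fun j => ?_
    rw [hsum T j, ← Finset.card_filter]
    have hcard : 3 * b + 1 ≤ 3 * b + (T.filter (fun p => p.1 = j)).card
        ↔ (T.filter (fun p => p.1 = j)).Nonempty := by
      rw [← Finset.card_pos]; omega
    rw [hcard, Finset.filter_nonempty_iff]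
    constructor
    · rintro ⟨p, hp, hpj⟩
      exact ⟨p.2, by rwa [← hpj]⟩
    · rintro ⟨c, hc⟩
      exact ⟨(j, c), hc, rfl⟩
  have main : ∀ (k : ℕ) (G : Fin k → (Finset (Fin n ⊕ (Fin d × Fin 2)) → Prop)),
      (∀ i, Weighted (G i)) →
      (∀ S, GammaId n d a b S ↔ ∀ i, G i S) →
      ∃ H : Fin k → (Finset (Fin d × Fin 2) → Prop),
        (∀ i, Weighted (H i)) ∧ ∀ T, GammaD d T ↔ ∀ i, H i T := by
    intro k G hW hGchar
    refine ⟨fun i T => G i (F T), ?_, ?_⟩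
    · intro i
      obtain ⟨q, w, hq, hw, hiff⟩ := hW i
      set c := ∑ x ∈ X, w (Sum.inl x) with hc
      refine ⟨max (q - c) 0, fun p => w (Sum.inr p), le_max_right _ _,
        fun p => hw _, ?_⟩
      intro T
      have hs : ∑ p ∈ F T, w p = c + ∑ p ∈ T, w (Sum.inr p) := by
        rw [hF]
        rw [Finset.sum_union (hdisj T), Finset.sum_map, Finset.sum_map]
        rfl
      have hnn : 0 ≤ ∑ p ∈ T, w (Sum.inr p) :=
        Finset.sum_nonneg fun p _ => hw _
      show G i (F T) ↔ max (q - c) 0 ≤ ∑ p ∈ T, w (Sum.inr p)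
      rw [hiff, hs, max_le_iff]
      constructor
      · intro h; exact ⟨by linarith, hnn⟩
      · rintro ⟨h, -⟩; linarith
    · intro T
      rw [← key T, hGchar (F T)]
  refine ⟨main, ?_⟩
  have hne : dimension (GammaId n d a b)
      ∈ {k | ∃ G : Fin k → (Finset (Fin n ⊕ (Fin d × Fin 2)) → Prop),
        (∀ i, Weighted (G i)) ∧ ∀ S, GammaId n d a b S ↔ ∀ i, G i S} := by
    apply Nat.sInf_mem
    refine ⟨d, fun j S => (3 * b + 1 : ℝ) ≤ ∑ p ∈ S, (wt n d a (j : Fin d) p : ℝ),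
      fun j => ⟨3 * b + 1, fun p => (wt n d a j p : ℝ), by positivity,
        fun p => by positivity, fun S => Iff.rfl⟩, ?_⟩
    intro S
    unfold GammaId
    refine forall_congr' fun j => ?_
    show _ ↔ (3 * (b:ℝ) + 1 ≤ ∑ p ∈ S, (wt n d a j p : ℝ))
    constructor
    · intro h; exact_mod_cast h
    · intro h; exact_mod_cast h
  obtain ⟨G, hW, hch⟩ := hne
  obtain ⟨H, hHW, hHch⟩ := main _ G hW hch
  exact Nat.sInf_le ⟨H, hHW, hHch⟩
end
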